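/- arXiv:1903.10340 — 2 statements merged into one kernel-verified Lean document; each statement's English description precedes it below -/
import Mathlib

section
/- Let δ ≥ 0, p ≥ 0, γ > 0, Ste > 0, F(x) = x + (δ/(p+1))·x^(p+1), β_γ(x) = 1 − (2x·exp(x²))/(γ·Ste), f(x) = x·exp(x²)·erf(x), and let λ₀ > 0 be the unique root of β_γ. Then there exists a unique λ_γ ∈ (0, λ₀) such that F(β_γ(λ_γ)) = (√π/Ste)·f(λ_γ). -/
/-!
Write `F(β_γ(x)) = (√π/Ste) f(x)` as `u x = v x` on `[0, λ₀]`. On this interval `β_γ` decreases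
from `1` to `0` and `F` increases on `[0, ∞)`, so `u` is strictly decreasing with `u 0 > 0 = u λ₀`,
while `v` is increasing with `v 0 = 0 < v λ₀`. The intermediate value theorem gives a crossing,
and strict monotonicity of `u - v` makes it unique.
-/

open Real

noncomputable def erf (x : ℝ) : ℝ := (2 / Real.sqrt π) * ∫ t in (0:ℝ)..x, Real.exp (-t^2)

open Set

theorem existsUnique_eq_of_strictAntiOn_of_monotoneOn {u v : ℝ → ℝ} {a b : ℝ} (hab : a ≤ b)
    (hu : ContinuousOn u (Icc a b)) (hv : ContinuousOn v (Icc a b))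
    (hu_anti : StrictAntiOn u (Icc a b)) (hv_mono : MonotoneOn v (Icc a b))
    (ha : v a < u a) (hb : u b < v b) :
    ∃! x, x ∈ Ioo a b ∧ u x = v x := by
  have hanti : StrictAntiOn (u - v) (Icc a b) := fun x hx y hy hxy => by
    simp only [Pi.sub_apply]
    linarith [hu_anti hx hy hxy, hv_mono hx hy hxy.le]
  obtain ⟨x, hx, hx0⟩ : (0 : ℝ) ∈ (u - v) '' Ioo a b :=
    intermediate_value_Ioo' hab (hu.sub hv) ⟨sub_neg.2 hb, sub_pos.2 ha⟩
  refine ⟨x, ⟨hx, sub_eq_zero.1 hx0⟩, fun y ⟨hy, hyx⟩ => ?_⟩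
  refine hanti.injOn (Ioo_subset_Icc_self hy) (Ioo_subset_Icc_self hx) ?_
  rw [hx0, Pi.sub_apply, hyx, sub_self]

theorem continuous_exp_neg_sq : Continuous fun t : ℝ => exp (-t ^ 2) := by fun_prop

theorem erf_zero : erf 0 = 0 := by simp [erf]

theorem continuous_erf : Continuous erf :=
  continuous_const.mul <| intervalIntegral.continuous_primitive
    (fun a b => continuous_exp_neg_sq.intervalIntegrable (μ := MeasureTheory.volume) a b) 0

theorem erf_pos {x : ℝ} (hx : 0 < x) : 0 < erf x :=
  mul_pos (div_pos two_pos (sqrt_pos.2 pi_pos)) <|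
    intervalIntegral.intervalIntegral_pos_of_pos_on
      (continuous_exp_neg_sq.intervalIntegrable 0 x) (fun _ _ => exp_pos _) hx

theorem monotone_erf : Monotone erf := by
  intro x y hxy
  refine mul_le_mul_of_nonneg_left ?_ (div_nonneg zero_le_two (sqrt_nonneg π))
  have hsplit := intervalIntegral.integral_add_adjacent_intervals
    (continuous_exp_neg_sq.intervalIntegrable (μ := MeasureTheory.volume) 0 x)
    (continuous_exp_neg_sq.intervalIntegrable x y)
  have hxy_nonneg : 0 ≤ ∫ t in x..y, exp (-t ^ 2) :=
    intervalIntegral.integral_nonneg hxy fun _ _ => (exp_pos _).le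
  linarith

theorem erf_nonneg {x : ℝ} (hx : 0 ≤ x) : 0 ≤ erf x := erf_zero ▸ monotone_erf hx

theorem strictMonoOn_mul_exp_sq : StrictMonoOn (fun x : ℝ => x * exp (x ^ 2)) (Ici 0) := by
  intro x hx y _ hxy
  have hexp : exp (x ^ 2) < exp (y ^ 2) := exp_lt_exp.2 (pow_lt_pow_left₀ hxy hx two_ne_zero)
  calc x * exp (x ^ 2) ≤ x * exp (y ^ 2) := mul_le_mul_of_nonneg_left hexp.le hx
    _ < y * exp (y ^ 2) := mul_lt_mul_of_pos_right hxy (exp_pos _)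

namespace Stefan

noncomputable def F (δ p y : ℝ) : ℝ := y + δ / (p + 1) * y ^ (p + 1)

noncomputable def beta (K x : ℝ) : ℝ := 1 - 2 * x * exp (x ^ 2) / K

noncomputable def f (x : ℝ) : ℝ := x * exp (x ^ 2) * erf x

variable {δ p K : ℝ}

theorem F_zero (hp : 0 ≤ p) : F δ p 0 = 0 := by
  simp [F, zero_rpow (by linarith : p + 1 ≠ 0)]

theorem continuous_F (hp : 0 ≤ p) : Continuous (F δ p) :=
  continuous_id.add <| continuous_const.mul <| continuous_rpow_const (by linarith)

theorem strictMonoOn_F (hδ : 0 ≤ δ) (hp : 0 ≤ p) : StrictMonoOn (F δ p) (Ici 0) :=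
  strictMonoOn_id.add_monotone fun _ hx _ _ hxy =>
    mul_le_mul_of_nonneg_left (rpow_le_rpow hx hxy (by linarith)) (div_nonneg hδ (by linarith))

theorem beta_zero : beta K 0 = 1 := by simp [beta]

theorem continuous_beta : Continuous (beta K) := by
  unfold beta; fun_prop

theorem strictAntiOn_beta (hK : 0 < K) : StrictAntiOn (beta K) (Ici 0) := by
  intro x hx y hy hxy
  have := strictMonoOn_mul_exp_sq hx hy hxy
  simp only [beta, mul_assoc]
  gcongr

theorem strictAntiOn_F_comp_beta (hδ : 0 ≤ δ) (hp : 0 ≤ p) (hK : 0 < K) {l₀ : ℝ}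
    (hl₀ : beta K l₀ = 0) : StrictAntiOn (F δ p ∘ beta K) (Icc 0 l₀) := by
  have hanti : StrictAntiOn (beta K) (Icc 0 l₀) := (strictAntiOn_beta hK).mono Icc_subset_Ici_self
  refine (strictMonoOn_F hδ hp).comp_strictAntiOn hanti fun x hx => ?_
  rw [mem_Ici, ← hl₀]
  exact hanti.antitoneOn hx ⟨hx.1.trans hx.2, le_rfl⟩ hx.2

theorem f_zero : f 0 = 0 := by simp [f]

theorem f_pos {x : ℝ} (hx : 0 < x) : 0 < f x :=
  mul_pos (mul_pos hx (exp_pos _)) (erf_pos hx)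

theorem continuous_f : Continuous f := by
  unfold f; have := continuous_erf; fun_prop

theorem monotoneOn_f : MonotoneOn f (Ici 0) :=
  strictMonoOn_mul_exp_sq.monotoneOn.mul (monotone_erf.monotoneOn _)
    (fun _ hx => mul_nonneg hx (exp_pos _).le) fun _ hx => erf_nonneg hx

end Stefan

/-- Existence and uniqueness of λ_γ ∈ (0, λ₀) solving F(β_γ(λ_γ)) = (√π/Ste)·f(λ_γ). -/
theorem exists_unique_lambda_gamma (δ p γ Ste l₀ : ℝ) (hδ : 0 ≤ δ) (hp : 0 ≤ p)
    (hγ : 0 < γ) (hSte : 0 < Ste) (hl₀ : 0 < l₀)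
    (hroot : 1 - (2 * l₀ * Real.exp (l₀^2)) / (γ * Ste) = 0) :
    ∃! lγ : ℝ, lγ ∈ Set.Ioo 0 l₀ ∧
      ((1 - (2 * lγ * Real.exp (lγ^2)) / (γ * Ste)) +
        (δ / (p + 1)) * (1 - (2 * lγ * Real.exp (lγ^2)) / (γ * Ste)) ^ (p + 1)) =
      (Real.sqrt π / Ste) * (lγ * Real.exp (lγ^2) * erf lγ) := by
  open Stefan in
  have hβl₀ : beta (γ * Ste) l₀ = 0 := hroot
  have hc : 0 < sqrt π / Ste := div_pos (sqrt_pos.2 pi_pos) hSte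
  have hu0 : 0 < F δ p (beta (γ * Ste) 0) := by
    rw [beta_zero, F, one_rpow]
    exact add_pos_of_pos_of_nonneg one_pos (mul_nonneg (div_nonneg hδ (by linarith)) zero_le_one)
  refine existsUnique_eq_of_strictAntiOn_of_monotoneOn (u := F δ p ∘ beta (γ * Ste))
    (v := fun x => sqrt π / Ste * f x) hl₀.le
    ((continuous_F hp).comp continuous_beta).continuousOn
    (continuous_const.mul continuous_f).continuousOn
    (strictAntiOn_F_comp_beta hδ hp (mul_pos hγ hSte) hβl₀)
    (fun _ hx _ hy hxy => mul_le_mul_of_nonneg_left (monotoneOn_f hx.1 hy.1 hxy) hc.le) ?_ ?_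
  · simpa [f_zero] using hu0
  · simpa [hβl₀, F_zero hp] using mul_pos hc (f_pos hl₀)
end

section
/- Let λ > 0, Ste > 0, a > 0, T₀ > T_f, and suppose y : [0, λ] → ℝ is C² and solves the reduced ODE problem 2η(1+δy^p)y′ + [(1+δy^p)y′]′ = 0, y(0)=1, y(λ)=0, y′(λ) = −2λ/Ste. Define T(x,t) = (T₀ − T_f)·y(x/(2a√t)) + T_f for 0 < x < s(t), t > 0, and s(t) = 2aλ√t. Then T satisfies the PDE ρ·c(T)·∂T/∂t = ∂/∂x(k(T)·∂T/∂x) on {0 < x < s(t), t > 0}, with T(0,t) = T₀, T(s(t),t) = T_f, and k₀·∂T/∂x(s(t),t) = −ρ·l·s′(t). -/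
/-!
With `θ = T₀ - T_f` and the similarity variable `η = x / (2a√t)`, the chain rule gives
`∂ₜT = -θ η y'(η) / (2t)` and `∂ₓT = θ y'(η) / (2a√t)`. Both coefficients are `M(y(η))` times
their reference values, `M u = 1 + δ uᵖ`, so the flux `k(T) ∂ₓT` equals `k₀θ/(2a√t) · M(y) y'`
on the whole liquid region; by the reduced ODE its `x`-derivative is
`-k₀θ · 2η M(y) y' / (4a²t)`, which is `ρ c(T) ∂ₜT` because `k₀ = ρ c₀ a²`.
The front `x = s(t)` is `η = λ`, where `y(λ) = 0` and `y'(λ) = -2λ/Ste` give the Stefan condition.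
-/

open Real Set Filter

noncomputable def similarityProfile (θ Tf a : ℝ) (y : ℝ → ℝ) (x t : ℝ) : ℝ :=
  θ * y (x / (2 * a * √t)) + Tf

section SimilarityProfile

variable {θ Tf a : ℝ} {y dy : ℝ → ℝ}

lemma similarityProfile_sub_div (hθ : θ ≠ 0) (x t : ℝ) :
    (similarityProfile θ Tf a y x t - Tf) / θ = y (x / (2 * a * √t)) := by
  simp only [similarityProfile, add_sub_cancel_right, mul_div_cancel_left₀ _ hθ]

lemma hasDerivAt_similarityProfile_time {x t : ℝ} (ha : a ≠ 0) (ht : 0 < t)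
    (hy : HasDerivAt y (dy (x / (2 * a * √t))) (x / (2 * a * √t))) :
    HasDerivAt (fun τ => similarityProfile θ Tf a y x τ)
      (-(θ * (x / (2 * a * √t)) * dy (x / (2 * a * √t)) / (2 * t))) t := by
  have hA : 2 * a * √t ≠ 0 := by positivity
  have hη : HasDerivAt (fun τ => x / (2 * a * √τ)) (-(x / (2 * a * √t)) / (2 * t)) t := by
    refine ((hasDerivAt_const t x).div ((hasDerivAt_sqrt ht.ne').const_mul (2 * a)) hA).congr_deriv
      ?_
    have hst : √t ≠ 0 := by positivity
    field_simp
    rw [sq_sqrt ht.le]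
    ring
  exact (((hy.comp t hη).const_mul θ).add_const Tf).congr_deriv (by ring)

lemma hasDerivAt_similarityProfile_space {x t : ℝ}
    (hy : HasDerivAt y (dy (x / (2 * a * √t))) (x / (2 * a * √t))) :
    HasDerivAt (fun ξ => similarityProfile θ Tf a y ξ t)
      (θ * dy (x / (2 * a * √t)) / (2 * a * √t)) x :=
  (((hy.comp x ((hasDerivAt_id x).div_const _)).const_mul θ).add_const Tf).congr_deriv (by ring)

variable {M : ℝ → ℝ} {l t : ℝ}

lemma similarityProfile_flux_eq (hθ : θ ≠ 0) (k₀ : ℝ) {ξ : ℝ}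
    (hy' : ∀ η ∈ Icc 0 l, HasDerivAt y (dy η) η) (hξ : ξ / (2 * a * √t) ∈ Icc 0 l) :
    k₀ * M ((similarityProfile θ Tf a y ξ t - Tf) / θ) *
        deriv (fun ξ' => similarityProfile θ Tf a y ξ' t) ξ =
      k₀ * θ / (2 * a * √t) * (M (y (ξ / (2 * a * √t))) * dy (ξ / (2 * a * √t))) := by
  rw [similarityProfile_sub_div hθ, (hasDerivAt_similarityProfile_space (hy' _ hξ)).deriv]
  ring

lemma hasDerivAt_similarityProfile_flux (hθ : θ ≠ 0) (ha : 0 < a) (ht : 0 < t) (k₀ : ℝ) {x : ℝ}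
    (hy' : ∀ η ∈ Icc 0 l, HasDerivAt y (dy η) η)
    (hODE : ∀ η ∈ Ioo 0 l, HasDerivAt (fun η => M (y η) * dy η) (-(2 * η * M (y η) * dy η)) η)
    (hx : x ∈ Ioo 0 (2 * a * l * √t)) :
    HasDerivAt (fun ξ => k₀ * M ((similarityProfile θ Tf a y ξ t - Tf) / θ) *
        deriv (fun ξ' => similarityProfile θ Tf a y ξ' t) ξ)
      (-(k₀ * θ * (2 * (x / (2 * a * √t)) * M (y (x / (2 * a * √t))) * dy (x / (2 * a * √t)))
        / (2 * a * √t) ^ 2)) x := by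
  set A := 2 * a * √t
  have hA : 0 < A := by positivity
  have hIoo : ∀ ξ ∈ Ioo 0 (2 * a * l * √t), ξ / A ∈ Ioo 0 l := fun ξ hξ =>
    ⟨div_pos hξ.1 hA, (div_lt_iff₀ hA).2 (by linarith [hξ.2])⟩
  have hflux : (fun ξ => k₀ * θ / A * (M (y (ξ / A)) * dy (ξ / A))) =ᶠ[nhds x]
      fun ξ => k₀ * M ((similarityProfile θ Tf a y ξ t - Tf) / θ) *
        deriv (fun ξ' => similarityProfile θ Tf a y ξ' t) ξ :=
    eventually_of_mem (isOpen_Ioo.mem_nhds hx) fun ξ hξ =>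
      (similarityProfile_flux_eq hθ k₀ hy' (Ioo_subset_Icc_self (hIoo ξ hξ))).symm
  refine ((((hODE _ (hIoo x hx)).comp x ((hasDerivAt_id x).div_const A)).const_mul
    (k₀ * θ / A)).congr_of_eventuallyEq hflux.symm).congr_deriv ?_
  field_simp

lemma similarityProfile_solves_diffusion {ρ c₀ k₀ : ℝ} (hθ : θ ≠ 0) (ha : 0 < a) (ht : 0 < t)
    (hk₀ : k₀ = ρ * c₀ * a ^ 2) {x : ℝ}
    (hy' : ∀ η ∈ Icc 0 l, HasDerivAt y (dy η) η)
    (hODE : ∀ η ∈ Ioo 0 l, HasDerivAt (fun η => M (y η) * dy η) (-(2 * η * M (y η) * dy η)) η)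
    (hx : x ∈ Ioo 0 (2 * a * l * √t)) :
    ρ * (c₀ * M ((similarityProfile θ Tf a y x t - Tf) / θ)) *
        deriv (fun τ => similarityProfile θ Tf a y x τ) t =
      deriv (fun ξ => k₀ * M ((similarityProfile θ Tf a y ξ t - Tf) / θ) *
        deriv (fun ξ' => similarityProfile θ Tf a y ξ' t) ξ) x := by
  have hA : 0 < 2 * a * √t := by positivity
  have hη : x / (2 * a * √t) ∈ Icc 0 l :=
    ⟨(div_pos hx.1 hA).le, (div_le_iff₀ hA).2 (by linarith [hx.2])⟩
  rw [(hasDerivAt_similarityProfile_time ha.ne' ht (hy' _ hη)).deriv,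
    (hasDerivAt_similarityProfile_flux hθ ha ht k₀ hy' hODE hx).deriv,
    similarityProfile_sub_div hθ, hk₀, mul_pow, mul_pow, sq_sqrt ht.le]
  field_simp

lemma front_div_similarityScale (ha : a ≠ 0) (ht : 0 < t) :
    2 * a * l * √t / (2 * a * √t) = l := by
  have : √t ≠ 0 := by positivity
  field_simp

lemma similarityProfile_front (ha : a ≠ 0) (ht : 0 < t) :
    similarityProfile θ Tf a y (2 * a * l * √t) t = θ * y l + Tf := by
  rw [similarityProfile, front_div_similarityScale ha ht]

lemma similarityProfile_stefan_condition {ρ c₀ k₀ L : ℝ} (hθ : θ ≠ 0) (ha : 0 < a) (ht : 0 < t)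
    (hc₀ : c₀ ≠ 0) (hL : L ≠ 0) (hk₀ : k₀ = ρ * c₀ * a ^ 2) (hy : HasDerivAt y (dy l) l)
    (hdyl : dy l = -(2 * l / (c₀ * θ / L))) :
    k₀ * deriv (fun ξ => similarityProfile θ Tf a y ξ t) (2 * a * l * √t) =
      -(ρ * L * deriv (fun τ => 2 * a * l * √τ) t) := by
  have hdy := front_div_similarityScale (l := l) ha.ne' ht ▸ hy
  rw [(hasDerivAt_similarityProfile_space hdy).deriv,
    ((hasDerivAt_sqrt ht.ne').const_mul (2 * a * l)).deriv, front_div_similarityScale ha.ne' ht,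
    hdyl, hk₀]
  have : √t ≠ 0 := by positivity
  field_simp

end SimilarityProfile

theorem similarity_solution_solves_stefan_general
    (δ p Ste l ρ latent k₀ c₀ a T₀ Tf : ℝ)
    (hl : 0 < l)
    (hρ : 0 < ρ) (hlatent : 0 < latent) (hc₀ : 0 < c₀)
    (ha : 0 < a) (hT : Tf < T₀)
    (ha2 : a ^ 2 = k₀ / (ρ * c₀)) (hSteDef : Ste = c₀ * (T₀ - Tf) / latent)
    (y dy : ℝ → ℝ)
    (hy' : ∀ η ∈ Set.Icc 0 l, HasDerivAt y (dy η) η)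
    (hODE : ∀ η ∈ Set.Ioo 0 l,
      HasDerivAt (fun t => (1 + δ * (y t) ^ p) * dy t)
        (-(2 * η * (1 + δ * (y η) ^ p) * dy η)) η)
    (hy0 : y 0 = 1) (hyl : y l = 0) (hdyl : dy l = -(2 * l / Ste))
    (k c : ℝ → ℝ)
    (hk : k = fun θ => k₀ * (1 + δ * ((θ - Tf) / (T₀ - Tf)) ^ p))
    (hc : c = fun θ => c₀ * (1 + δ * ((θ - Tf) / (T₀ - Tf)) ^ p))
    (T : ℝ → ℝ → ℝ) (s : ℝ → ℝ)
    (hT' : T = fun x t => (T₀ - Tf) * y (x / (2 * a * Real.sqrt t)) + Tf)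
    (hs : s = fun t => 2 * a * l * Real.sqrt t) :
    (∀ t > (0:ℝ), ∀ x ∈ Set.Ioo 0 (s t),
      ρ * c (T x t) * deriv (fun τ => T x τ) t =
        deriv (fun ξ => k (T ξ t) * deriv (fun ξ' => T ξ' t) ξ) x) ∧
    (∀ t > (0:ℝ), T 0 t = T₀) ∧
    (∀ t > (0:ℝ), T (s t) t = Tf) ∧
    (∀ t > (0:ℝ), k₀ * deriv (fun ξ => T ξ t) (s t) = -(ρ * latent * deriv s t)) ∧
    s 0 = 0 := by
  subst hT' hs hk hc hSteDef
  have hθ : T₀ - Tf ≠ 0 := (sub_pos.2 hT).ne'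
  have hk₀ : k₀ = ρ * c₀ * a ^ 2 := by
    rw [ha2]
    field_simp
  refine ⟨fun t ht x hx => ?_, fun t _ => by simp [hy0], fun t ht => ?_, fun t ht => ?_, by simp⟩
  · exact similarityProfile_solves_diffusion (M := fun u => 1 + δ * u ^ p) hθ ha ht hk₀ hy' hODE hx
  · exact (similarityProfile_front ha.ne' ht).trans (by simp [hyl])
  · exact similarityProfile_stefan_condition hθ ha ht hc₀.ne' hlatent.ne' hk₀
      (hy' l ⟨hl.le, le_rfl⟩) hdyl

/-- If y solves the reduced ODE problem, then T(x,t) = (T₀−T_f) y(x/(2a√t)) + T_f and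
s(t) = 2aλ√t solve the one-phase Stefan problem with Dirichlet condition at x = 0. -/
theorem similarity_solution_solves_stefan
    (δ p Ste l ρ latent k₀ c₀ a T₀ Tf : ℝ)
    (hδ : 0 ≤ δ) (hp : 0 ≤ p) (hSte : 0 < Ste) (hl : 0 < l)
    (hρ : 0 < ρ) (hlatent : 0 < latent) (hk₀ : 0 < k₀) (hc₀ : 0 < c₀)
    (ha : 0 < a) (hT : Tf < T₀)
    (ha2 : a ^ 2 = k₀ / (ρ * c₀)) (hSteDef : Ste = c₀ * (T₀ - Tf) / latent)
    (y dy : ℝ → ℝ)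
    (hynn : ∀ η ∈ Set.Icc 0 l, 0 ≤ y η)
    (hy' : ∀ η ∈ Set.Icc 0 l, HasDerivAt y (dy η) η)
    (hODE : ∀ η ∈ Set.Ioo 0 l,
      HasDerivAt (fun t => (1 + δ * (y t) ^ p) * dy t)
        (-(2 * η * (1 + δ * (y η) ^ p) * dy η)) η)
    (hy0 : y 0 = 1) (hyl : y l = 0) (hdyl : dy l = -(2 * l / Ste))
    (k c : ℝ → ℝ)
    (hk : k = fun θ => k₀ * (1 + δ * ((θ - Tf) / (T₀ - Tf)) ^ p))
    (hc : c = fun θ => c₀ * (1 + δ * ((θ - Tf) / (T₀ - Tf)) ^ p))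
    (T : ℝ → ℝ → ℝ) (s : ℝ → ℝ)
    (hT' : T = fun x t => (T₀ - Tf) * y (x / (2 * a * Real.sqrt t)) + Tf)
    (hs : s = fun t => 2 * a * l * Real.sqrt t) :
    (∀ t > (0:ℝ), ∀ x ∈ Set.Ioo 0 (s t),
      ρ * c (T x t) * deriv (fun τ => T x τ) t =
        deriv (fun ξ => k (T ξ t) * deriv (fun ξ' => T ξ' t) ξ) x) ∧
    (∀ t > (0:ℝ), T 0 t = T₀) ∧
    (∀ t > (0:ℝ), T (s t) t = Tf) ∧
    (∀ t > (0:ℝ), k₀ * deriv (fun ξ => T ξ t) (s t) = -(ρ * latent * deriv s t)) ∧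
    s 0 = 0 :=
  similarity_solution_solves_stefan_general δ p Ste l ρ latent k₀ c₀ a T₀ Tf hl hρ hlatent hc₀ ha hT
    ha2 hSteDef y dy hy' hODE hy0 hyl hdyl k c hk hc T s hT' hs
end
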